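/- Let ρ0 and ρ1 be n×n complex positive semidefinite matrices with rank(ρ0) + rank(ρ1) = rank(ρ0 + ρ1) = n, and set Σ = ρ0 + ρ1. Then ρ0 · Σ⁻¹ · ρ0 = ρ0, ρ1 · Σ⁻¹ · ρ1 = ρ1, and √ρ0 · Σ⁻¹ · √ρ0 equals the orthogonal projection P0 onto the range of ρ0 (likewise √ρ1 · Σ⁻¹ · √ρ1 = P1). -/

import Mathlib

/-!
Since `rank ρ0 + rank ρ1 = rank Σ`, the ranges of `ρ0` and `ρ1` meet only in `0`. The matrix
`ρ0 Σ⁻¹ ρ1 = ρ1 - ρ1 Σ⁻¹ ρ1` has its range in both, so it vanishes, and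
`ρ0 Σ⁻¹ ρ0 = ρ0 Σ⁻¹ Σ = ρ0`. Thus `ρ0 Σ⁻¹` is an idempotent fixing `range ρ0 = range √ρ0`, so
`ρ0 Σ⁻¹ √ρ0 = √ρ0`, which makes `√ρ0 Σ⁻¹ √ρ0` a Hermitian idempotent with the same range as `ρ0`,
i.e. the orthogonal projection `P0`.
-/

open Matrix
open scoped ComplexOrder

/-- The positive semidefinite square root of a matrix (zero if the matrix is not
positive semidefinite). -/
noncomputable def msqrt {n : ℕ} (A : Matrix (Fin n) (Fin n) ℂ) : Matrix (Fin n) (Fin n) ℂ :=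
  open scoped Classical in
  if h : A.PosSemidef then
    (h.1.eigenvectorUnitary : Matrix (Fin n) (Fin n) ℂ) *
      diagonal ((↑) ∘ Real.sqrt ∘ h.1.eigenvalues) *
      (star h.1.eigenvectorUnitary : Matrix (Fin n) (Fin n) ℂ)
  else 0

/-- `P` is the orthogonal projection onto the range (support) of `A`. -/
def IsRangeProj {n : ℕ} (A P : Matrix (Fin n) (Fin n) ℂ) : Prop :=
  P.IsHermitian ∧ P * P = P ∧
    LinearMap.range P.mulVecLin = LinearMap.range A.mulVecLin

namespace Matrix

section Field

variable {l m n K : Type*} [Fintype n] [Field K]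

theorem isUnit_of_rank_eq_card [DecidableEq n] {A : Matrix n n K}
    (h : A.rank = Fintype.card n) : IsUnit A := by
  have htop : LinearMap.range A.mulVecLin = ⊤ :=
    Submodule.eq_top_of_finrank_eq (by rw [Module.finrank_fintype_fun_eq_card]; exact h)
  exact mulVec_surjective_iff_isUnit.mp (LinearMap.range_eq_top.mp htop)

theorem range_mulVecLin_mul_le [Fintype l] (A : Matrix m n K) (B : Matrix n l K) :
    LinearMap.range (A * B).mulVecLin ≤ LinearMap.range A.mulVecLin := by
  rw [mulVecLin_mul]
  exact LinearMap.range_comp_le_range _ _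

theorem inf_range_mulVecLin_eq_bot_of_rank_add_eq [Finite m] {A B : Matrix m n K}
    (h : A.rank + B.rank = (A + B).rank) :
    LinearMap.range A.mulVecLin ⊓ LinearMap.range B.mulVecLin = ⊥ := by
  have hle : Module.finrank K (LinearMap.range (A + B).mulVecLin) ≤
      Module.finrank K ↥(LinearMap.range A.mulVecLin ⊔ LinearMap.range B.mulVecLin) := by
    rw [mulVecLin_add]
    exact Submodule.finrank_mono (LinearMap.range_add_le _ _)
  have := Submodule.finrank_sup_add_finrank_inf_eq
    (LinearMap.range A.mulVecLin) (LinearMap.range B.mulVecLin)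
  rw [← Submodule.finrank_eq_zero (R := K)]
  unfold rank at h
  omega

theorem mul_eq_of_isIdempotentElem_of_range_le [Fintype m] {E : Matrix m m K} {M : Matrix m n K}
    (hE : IsIdempotentElem E)
    (h : LinearMap.range M.mulVecLin ≤ LinearMap.range E.mulVecLin) : E * M = M := by
  refine ext_iff_mulVec.mpr fun v => ?_
  obtain ⟨w, hw⟩ := h (LinearMap.mem_range_self M.mulVecLin v)
  simp only [mulVecLin_apply] at hw
  rw [← mulVec_mulVec, ← hw, mulVec_mulVec, hE.eq]

variable [DecidableEq n]

theorem mul_inv_add_mul_eq_zero {A B : Matrix n n K} (hAB : IsUnit (A + B))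
    (h : LinearMap.range A.mulVecLin ⊓ LinearMap.range B.mulVecLin = ⊥) :
    A * (A + B)⁻¹ * B = 0 := by
  have hB : A * (A + B)⁻¹ * B = B * (1 - (A + B)⁻¹ * B) :=
    calc A * (A + B)⁻¹ * B = ((A + B) - B) * (A + B)⁻¹ * B := by rw [add_sub_cancel_right]
      _ = (A + B) * (A + B)⁻¹ * B - B * (A + B)⁻¹ * B := by rw [sub_mul, sub_mul]
      _ = B * (1 - (A + B)⁻¹ * B) := by
        rw [mul_nonsing_inv _ ((isUnit_iff_isUnit_det _).mp hAB), one_mul, mul_sub, mul_one,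
          mul_assoc]
  have hbot : LinearMap.range (A * (A + B)⁻¹ * B).mulVecLin = ⊥ := by
    refine le_bot_iff.mp (h ▸ le_inf ?_ ?_)
    · rw [mul_assoc]; exact range_mulVecLin_mul_le _ _
    · rw [hB]; exact range_mulVecLin_mul_le _ _
  exact ext_iff_mulVec.mpr fun v => by
    simpa [mul_assoc] using LinearMap.congr_fun (LinearMap.range_eq_bot.mp hbot) v

theorem mul_inv_add_mul_self {A B : Matrix n n K} (hAB : IsUnit (A + B))
    (h : LinearMap.range A.mulVecLin ⊓ LinearMap.range B.mulVecLin = ⊥) :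
    A * (A + B)⁻¹ * A = A :=
  calc A * (A + B)⁻¹ * A = A * (A + B)⁻¹ * (A + B) - A * (A + B)⁻¹ * B := by
        rw [mul_add, add_sub_cancel_right]
    _ = A := by
        rw [mul_assoc, nonsing_inv_mul _ ((isUnit_iff_isUnit_det _).mp hAB),
          mul_inv_add_mul_eq_zero hAB h, mul_one, sub_zero]

end Field

section StarOrderedField

variable {m n K : Type*} [Fintype m] [Fintype n] [Field K] [PartialOrder K] [StarRing K]
  [StarOrderedRing K]

theorem range_mulVecLin_self_mul_conjTranspose (A : Matrix m n K) :
    LinearMap.range (A * Aᴴ).mulVecLin = LinearMap.range A.mulVecLin :=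
  Submodule.eq_of_le_of_finrank_eq (range_mulVecLin_mul_le _ _) (rank_self_mul_conjTranspose A)

end StarOrderedField

end Matrix

section SquareRoot

variable {n : ℕ} {A : Matrix (Fin n) (Fin n) ℂ}

theorem msqrt_eq_cfc (hA : A.PosSemidef) : msqrt A = cfc Real.sqrt A := by
  rw [msqrt, dif_pos hA, hA.1.cfc_eq, IsHermitian.cfc, Unitary.conjStarAlgAut_apply]
  rfl

theorem isHermitian_msqrt (hA : A.PosSemidef) : (msqrt A).IsHermitian := by
  rw [msqrt_eq_cfc hA]
  exact (cfc_predicate Real.sqrt A).isHermitian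

theorem msqrt_mul_self (hA : A.PosSemidef) : msqrt A * msqrt A = A := by
  rw [msqrt_eq_cfc hA, ← cfc_mul Real.sqrt Real.sqrt A]
  conv_rhs => rw [← cfc_id' ℝ A hA.1.isSelfAdjoint]
  refine cfc_congr fun x hx => Real.mul_self_sqrt ?_
  obtain ⟨i, rfl⟩ := hA.1.spectrum_real_eq_range_eigenvalues ▸ hx
  exact hA.eigenvalues_nonneg i

theorem range_mulVecLin_msqrt (hA : A.PosSemidef) :
    LinearMap.range (msqrt A).mulVecLin = LinearMap.range A.mulVecLin := by
  rw [← range_mulVecLin_self_mul_conjTranspose, (isHermitian_msqrt hA).eq, msqrt_mul_self hA]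

end SquareRoot

section RangeProjection

variable {n : ℕ} {A : Matrix (Fin n) (Fin n) ℂ}

theorem IsRangeProj.eq {P Q : Matrix (Fin n) (Fin n) ℂ} (hP : IsRangeProj A P)
    (hQ : IsRangeProj A Q) : P = Q := by
  obtain ⟨hPH, hPP, hPA⟩ := hP
  obtain ⟨hQH, hQQ, hQA⟩ := hQ
  have hPQ : P * Q = Q := mul_eq_of_isIdempotentElem_of_range_le hPP (by rw [hPA, hQA])
  have hQP : Q * P = P := mul_eq_of_isIdempotentElem_of_range_le hQQ (by rw [hPA, hQA])
  calc P = Q * P := hQP.symm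
    _ = (P * Q)ᴴ := by rw [conjTranspose_mul, hPH.eq, hQH.eq]
    _ = Q := by rw [hPQ, hQH.eq]

theorem isRangeProj_msqrt_mul_mul_msqrt {X : Matrix (Fin n) (Fin n) ℂ} (hA : A.PosSemidef)
    (hX : X.IsHermitian) (hAXA : A * X * A = A) : IsRangeProj A (msqrt A * X * msqrt A) := by
  set s := msqrt A
  have hs : s.IsHermitian := isHermitian_msqrt hA
  have hss : s * s = A := msqrt_mul_self hA
  have hAXs : A * X * s = s := by
    refine mul_eq_of_isIdempotentElem_of_range_le (E := A * X) ?_ ?_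
    · change A * X * (A * X) = A * X
      rw [← mul_assoc, hAXA]
    · rw [range_mulVecLin_msqrt hA]
      conv_lhs => rw [← hAXA]
      exact range_mulVecLin_mul_le _ _
  have hsXA : s * X * A = s := by
    simpa [conjTranspose_mul, hA.1.eq, hX.eq, hs.eq, mul_assoc] using congrArg conjTranspose hAXs
  have hsXsA : s * X * s * A = A :=
    calc s * X * s * A = s * X * s * (s * s) := by rw [hss]
      _ = s * X * (s * s) * s := by simp only [mul_assoc]
      _ = A := by rw [hss, hsXA, hss]
  refine ⟨by simpa [hs.eq] using isHermitian_conjTranspose_mul_mul s hX, ?_, le_antisymm ?_ ?_⟩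
  · calc s * X * s * (s * X * s) = s * X * (s * s) * (X * s) := by simp only [mul_assoc]
      _ = s * X * s := by rw [hss, hsXA, mul_assoc]
  · rw [← range_mulVecLin_msqrt hA, mul_assoc]
    exact range_mulVecLin_mul_le _ _
  · conv_lhs => rw [← hsXsA]
    exact range_mulVecLin_mul_le _ _

end RangeProjection

/-- If `rank ρ0 + rank ρ1 = rank (ρ0 + ρ1) = n` and `Σ = ρ0 + ρ1`, then
`ρ0 Σ⁻¹ ρ0 = ρ0`, `ρ1 Σ⁻¹ ρ1 = ρ1`, `√ρ0 Σ⁻¹ √ρ0 = P0` and `√ρ1 Σ⁻¹ √ρ1 = P1`. -/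
theorem parallel_addition_projections {n : ℕ}
    (ρ0 ρ1 P0 P1 : Matrix (Fin n) (Fin n) ℂ)
    (hρ0 : ρ0.PosSemidef) (hρ1 : ρ1.PosSemidef)
    (hrank : ρ0.rank + ρ1.rank = (ρ0 + ρ1).rank)
    (hfull : (ρ0 + ρ1).rank = n)
    (hP0 : IsRangeProj ρ0 P0) (hP1 : IsRangeProj ρ1 P1) :
    ρ0 * (ρ0 + ρ1)⁻¹ * ρ0 = ρ0 ∧
      ρ1 * (ρ0 + ρ1)⁻¹ * ρ1 = ρ1 ∧
      msqrt ρ0 * (ρ0 + ρ1)⁻¹ * msqrt ρ0 = P0 ∧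
      msqrt ρ1 * (ρ0 + ρ1)⁻¹ * msqrt ρ1 = P1 := by
  have hunit : IsUnit (ρ0 + ρ1) := isUnit_of_rank_eq_card (by rw [hfull, Fintype.card_fin])
  have hdisj := inf_range_mulVecLin_eq_bot_of_rank_add_eq hrank
  have h0 : ρ0 * (ρ0 + ρ1)⁻¹ * ρ0 = ρ0 := mul_inv_add_mul_self hunit hdisj
  have h1 : ρ1 * (ρ0 + ρ1)⁻¹ * ρ1 = ρ1 := by
    rw [add_comm] at hunit ⊢
    rw [inf_comm] at hdisj
    exact mul_inv_add_mul_self hunit hdisj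
  have hinv : (ρ0 + ρ1)⁻¹.IsHermitian := (hρ0.1.add hρ1.1).inv
  exact ⟨h0, h1, (isRangeProj_msqrt_mul_mul_msqrt hρ0 hinv h0).eq hP0,
    (isRangeProj_msqrt_mul_mul_msqrt hρ1 hinv h1).eq hP1⟩
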